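/- arXiv:2503.13666 — 7 statements merged into one kernel-verified Lean document; each statement's English description precedes it below -/
import Mathlib

section
/- Let S be a topological semigroup with a dense inverse subsemigroup X such that for every y ∈ S \ X there exists an ultrafilter F converging to y with X ∈ F and such that the ultrafilter generated by {F⁻¹ : F ∈ F, F ⊆ X} converges to some element of S. Then S is an inverse semigroup. -/
open Filter Topology

/-- Proposition: let `S` be a (Hausdorff) topological semigroup containing a dense inverse
subsemigroup `X` (with inversion map `inv` on `X`), such that every `y ∈ S \ X` is the limit of
an ultrafilter `𝓕` containing `X` whose image under inversion (the ultrafilter generated by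
the sets `F⁻¹` for `F ∈ 𝓕`, `F ⊆ X`) converges in `S`.  Then `S` is an inverse semigroup. -/
theorem inverse_of_dense_inverse_ultrafilters {S : Type*} [Semigroup S] [TopologicalSpace S]
    [T2Space S] [ContinuousMul S] (X : Subsemigroup S) (hdense : Dense (X : Set S))
    (inv : S → S)
    (hmem : ∀ x ∈ X, inv x ∈ X)
    (hinv : ∀ x ∈ X, x * inv x * x = x ∧ inv x * x * inv x = inv x)
    (huniq : ∀ x ∈ X, ∀ y ∈ X, x * y * x = x → y * x * y = y → y = inv x)
    (hUF : ∀ y : S, y ∉ X → ∃ 𝓕 : Ultrafilter S, (𝓕 : Filter S) ≤ 𝓝 y ∧ (X : Set S) ∈ 𝓕 ∧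
      ∃ z : S, (Ultrafilter.map inv 𝓕 : Filter S) ≤ 𝓝 z) :
    ∀ x : S, ∃! y : S, x * y * x = x ∧ y * x * y = y := by
  classical
  set EX : Set S := {a : S | a ∈ X ∧ a * a = a} with hEXdef
  -- Step 1a: the product of two idempotents of X is idempotent.
  have hidem : ∀ e ∈ X, e * e = e → ∀ f ∈ X, f * f = f → (e * f) * (e * f) = e * f := by
    intro e heX he f hfX hf
    set s := inv (e * f) with hs
    have hefX : e * f ∈ X := X.mul_mem heX hfX
    have hsX : s ∈ X := hmem _ hefX
    obtain ⟨hs1, hs2⟩ := hinv (e * f) hefX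
    have htX : f * s * e ∈ X := X.mul_mem (X.mul_mem hfX hsX) heX
    have ht1 : (e * f) * (f * s * e) * (e * f) = e * f := by
      calc (e * f) * (f * s * e) * (e * f)
          = e * (f * f) * s * (e * e) * f := by simp only [mul_assoc]
        _ = (e * f) * s * (e * f) := by rw [he, hf]; simp only [mul_assoc]
        _ = e * f := hs1
    have ht2 : (f * s * e) * (e * f) * (f * s * e) = f * s * e := by
      calc (f * s * e) * (e * f) * (f * s * e)
          = f * s * (e * e) * (f * f) * s * e := by simp only [mul_assoc]
        _ = f * (s * (e * f) * s) * e := by rw [he, hf]; simp only [mul_assoc]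
        _ = f * s * e := by rw [hs2]
    have hts : f * s * e = s := by
      have := huniq (e * f) hefX (f * s * e) htX ht1 ht2
      rw [this, ← hs]
    have hss : s * s = s := by
      have htt : (f * s * e) * (f * s * e) = f * s * e := by
        calc (f * s * e) * (f * s * e)
            = f * (s * (e * f) * s) * e := by simp only [mul_assoc]
          _ = f * s * e := by rw [hs2]
      rw [hts] at htt
      exact htt
    have hefs : e * f = s := by
      have ha : e * f = inv s := huniq s hsX (e * f) hefX hs2 hs1
      have hb : s = inv s := huniq s hsX s hsX (by rw [hss, hss]) (by rw [hss, hss])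
      rw [ha, ← hb]
    rw [hefs, hss]
  -- Step 1b: idempotents of X commute.
  have hcommX : ∀ e ∈ X, e * e = e → ∀ f ∈ X, f * f = f → e * f = f * e := by
    intro e heX he f hfX hf
    have hef := hidem e heX he f hfX hf
    have hfe := hidem f hfX hf e heX he
    have hefX : e * f ∈ X := X.mul_mem heX hfX
    have hfeX : f * e ∈ X := X.mul_mem hfX heX
    have h1 : (e * f) * (f * e) * (e * f) = e * f := by
      calc (e * f) * (f * e) * (e * f)
          = e * (f * f) * (e * e) * f := by simp only [mul_assoc]
        _ = (e * f) * (e * f) := by rw [he, hf]; simp only [mul_assoc]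
        _ = e * f := hef
    have h2 : (f * e) * (e * f) * (f * e) = f * e := by
      calc (f * e) * (e * f) * (f * e)
          = f * (e * e) * (f * f) * e := by simp only [mul_assoc]
        _ = (f * e) * (f * e) := by rw [he, hf]; simp only [mul_assoc]
        _ = f * e := hfe
    have ha : f * e = inv (e * f) := huniq (e * f) hefX (f * e) hfeX h1 h2
    have hb : e * f = inv (e * f) := huniq (e * f) hefX (e * f) hefX
      (by rw [hef, hef]) (by rw [hef, hef])
    rw [hb, ha]
  -- Step 2: the closure of EX is a commutative set of idempotents.
  have hclos_comm : ∀ p ∈ closure EX, ∀ q ∈ closure EX, p * q = q * p := by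
    have step1 : ∀ a ∈ EX, ∀ q ∈ closure EX, a * q = q * a := by
      intro a ha q hq
      have hsub : closure EX ⊆ {b : S | a * b = b * a} :=
        closure_minimal (fun b hb => hcommX a ha.1 ha.2 b hb.1 hb.2)
          (isClosed_eq (continuous_const.mul continuous_id) (continuous_id.mul continuous_const))
      exact hsub hq
    intro p hp q hq
    have hsub : closure EX ⊆ {b : S | b * q = q * b} :=
      closure_minimal (fun a ha => step1 a ha q hq)
        (isClosed_eq (continuous_id.mul continuous_const) (continuous_const.mul continuous_id))
    exact hsub hp
  -- Step 3: every element of S has an inverse z with x*z and z*x in closure EX.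
  have hreg : ∀ x : S, ∃ z : S, x * z * x = x ∧ z * x * z = z ∧
      x * z ∈ closure EX ∧ z * x ∈ closure EX := by
    intro x
    by_cases hx : x ∈ X
    · refine ⟨inv x, (hinv x hx).1, (hinv x hx).2, subset_closure ⟨X.mul_mem hx (hmem x hx), ?_⟩,
        subset_closure ⟨X.mul_mem (hmem x hx) hx, ?_⟩⟩
      · rw [← mul_assoc, (hinv x hx).1]
      · rw [← mul_assoc, (hinv x hx).2]
    · obtain ⟨𝓕, hF, hFX, z, hz⟩ := hUF x hx
      have h1 : Tendsto (fun w : S => w) (𝓕 : Filter S) (𝓝 x) := hF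
      have h2 : Tendsto inv (𝓕 : Filter S) (𝓝 z) := by
        simpa only [Filter.Tendsto, Ultrafilter.coe_map] using hz
      refine ⟨z, ?_, ?_, ?_, ?_⟩
      · have h3 : Tendsto (fun w : S => w * inv w * w) (𝓕 : Filter S) (𝓝 (x * z * x)) :=
          (h1.mul h2).mul h1
        have h4 : Tendsto (fun w : S => w) (𝓕 : Filter S) (𝓝 (x * z * x)) := by
          refine h3.congr' ?_
          filter_upwards [hFX] with w hw
          exact (hinv w hw).1
        exact tendsto_nhds_unique h4 h1
      · have h3 : Tendsto (fun w : S => inv w * w * inv w) (𝓕 : Filter S) (𝓝 (z * x * z)) :=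
          (h2.mul h1).mul h2
        have h4 : Tendsto inv (𝓕 : Filter S) (𝓝 (z * x * z)) := by
          refine h3.congr' ?_
          filter_upwards [hFX] with w hw
          exact (hinv w hw).2
        exact tendsto_nhds_unique h4 h2
      · refine mem_closure_of_tendsto (h1.mul h2) ?_
        filter_upwards [hFX] with w hw
        exact ⟨X.mul_mem hw (hmem w hw), by rw [← mul_assoc, (hinv w hw).1]⟩
      · refine mem_closure_of_tendsto (h2.mul h1) ?_
        filter_upwards [hFX] with w hw
        exact ⟨X.mul_mem (hmem w hw) hw, by rw [← mul_assoc, (hinv w hw).2]⟩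
  -- Step 4: every idempotent of S lies in the closure of EX.
  have hES : ∀ e : S, e * e = e → e ∈ closure EX := by
    intro e he
    obtain ⟨z, h1, h2, h3, h4⟩ := hreg e
    have hz : e * z * (z * e) = z := by
      rw [hclos_comm _ h3 _ h4]
      calc (z * e) * (e * z) = z * (e * e) * z := by simp only [mul_assoc]
        _ = z := by rw [he]; exact h2
    have hez : e = z := by
      calc e = e * z * e := h1.symm
        _ = e * (e * z * (z * e)) * e := by rw [hz]
        _ = e * z * (z * e) := by
            simp only [mul_assoc]; rw [he, ← mul_assoc e e, he]
        _ = z := hz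
    have hmemc : e * z ∈ closure EX := h3
    rw [← hez, he] at hmemc
    exact hmemc
  -- Step 5: uniqueness of inverses.
  have key : ∀ y₁ y₂ : S, ∀ x : S, x * y₁ * x = x → y₁ * x * y₁ = y₁ →
      x * y₂ * x = x → y₂ * x * y₂ = y₂ → y₁ = y₂ := by
    intro y₁ y₂ x a1 a2 b1 b2
    have e1 : x * y₁ ∈ closure EX := hES _ (by rw [← mul_assoc, a1])
    have e2 : x * y₂ ∈ closure EX := hES _ (by rw [← mul_assoc, b1])
    have f1 : y₁ * x ∈ closure EX := hES _ (by rw [← mul_assoc, a2])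
    have f2 : y₂ * x ∈ closure EX := hES _ (by rw [← mul_assoc, b2])
    have ca : y₁ = y₂ * x * y₁ := by
      calc y₁ = y₁ * x * y₁ := a2.symm
        _ = y₁ * (x * y₂ * x) * y₁ := by rw [b1]
        _ = (y₁ * x) * (y₂ * x) * y₁ := by simp only [mul_assoc]
        _ = (y₂ * x) * (y₁ * x) * y₁ := by rw [hclos_comm _ f1 _ f2]
        _ = y₂ * (x * y₁ * x) * y₁ := by simp only [mul_assoc]
        _ = y₂ * x * y₁ := by rw [a1]
    have cb : x * y₁ = x * y₂ := by
      calc x * y₁ = x * (y₂ * x * y₁) := by rw [← ca]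
        _ = (x * y₂) * (x * y₁) := by simp only [mul_assoc]
        _ = (x * y₁) * (x * y₂) := by rw [hclos_comm _ e2 _ e1]
        _ = (x * y₁ * x) * y₂ := by simp only [mul_assoc]
        _ = x * y₂ := by rw [a1]
    calc y₁ = y₂ * x * y₁ := ca
      _ = y₂ * (x * y₁) := by rw [mul_assoc]
      _ = y₂ * (x * y₂) := by rw [cb]
      _ = y₂ * x * y₂ := by rw [← mul_assoc]
      _ = y₂ := b2
  intro x
  obtain ⟨z, h1, h2, _, _⟩ := hreg x
  refine ⟨z, ⟨h1, h2⟩, ?_⟩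
  intro y hy
  exact key y z x hy.1 hy.2 h1 h2
end

section
/- Let S be a compact topological semigroup that contains a dense inverse subsemigroup. Then S is an inverse semigroup and the inversion map x ↦ x⁻¹ is continuous, i.e., S is a topological inverse semigroup. -/
open Topology

private lemma idem_step {S : Type*} [Semigroup S] {e : S} (he : e * e = e) (z : S) :
    e * (e * z) = e * z := by rw [← mul_assoc, he]

/-- A compact (Hausdorff) topological semigroup containing a dense inverse subsemigroup is a
topological inverse semigroup: it is an inverse semigroup and its inversion map is continuous. -/
theorem compact_dense_inverse_subsemigroup {S : Type*} [Semigroup S] [TopologicalSpace S]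
    [T2Space S] [CompactSpace S] [ContinuousMul S]
    (X : Subsemigroup S)
    (hdense : Dense (X : Set S))
    (hX : ∀ x ∈ X, ∃! y : S, y ∈ X ∧ x * y * x = x ∧ y * x * y = y) :
    ∃ i : S → S, Continuous i ∧
      ∀ x : S, (x * i x * x = x ∧ i x * x * i x = i x) ∧
        ∀ y : S, x * y * x = x → y * x * y = y → y = i x := by
  classical
  -- the graph of the inversion on X
  set G : Set (S × S) :=
    {p | p.1 ∈ X ∧ p.2 ∈ X ∧ p.1 * p.2 * p.1 = p.1 ∧ p.2 * p.1 * p.2 = p.2} with hGdef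
  -- every point of the closure of G is a pair of mutually inverse elements
  have hΓinv : ∀ p ∈ closure G, p.1 * p.2 * p.1 = p.1 ∧ p.2 * p.1 * p.2 = p.2 := by
    have hcl : IsClosed {p : S × S | p.1 * p.2 * p.1 = p.1 ∧ p.2 * p.1 * p.2 = p.2} := by
      apply IsClosed.inter
      · exact isClosed_eq ((continuous_fst.mul continuous_snd).mul continuous_fst) continuous_fst
      · exact isClosed_eq ((continuous_snd.mul continuous_fst).mul continuous_snd) continuous_snd
    exact fun p hp =>
      closure_minimal (fun q hq =>
        Set.mem_setOf_eq ▸ (⟨hq.2.2.1, hq.2.2.2⟩ :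
          q.1 * q.2 * q.1 = q.1 ∧ q.2 * q.1 * q.2 = q.2)) hcl hp
  -- S is regular: every element has an inverse coming from the closure of G
  have hsurj : ∀ a : S, ∃ b : S, (a, b) ∈ closure G := by
    have hΓc : IsCompact (closure G) := isClosed_closure.isCompact
    have himg : IsClosed (Prod.fst '' closure G) := (hΓc.image continuous_fst).isClosed
    have hXsub : (X : Set S) ⊆ Prod.fst '' closure G := by
      intro x hx
      obtain ⟨y, ⟨hyX, h1, h2⟩, -⟩ := hX x hx
      exact ⟨(x, y), subset_closure ⟨hx, hyX, h1, h2⟩, rfl⟩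
    intro a
    have ha : a ∈ Prod.fst '' closure G := by
      have h1 : a ∈ closure (X : Set S) := hdense a
      have h2 := closure_mono hXsub h1
      rwa [himg.closure_eq] at h2
    obtain ⟨p, hp, hpa⟩ := ha
    refine ⟨p.2, ?_⟩
    rw [← hpa]
    exact hp
  -- the idempotents of X
  set EX : Set S := {e | e ∈ X ∧ e * e = e} with hEXdef
  -- products of idempotents of X are idempotent
  have hEXmulidem : ∀ e ∈ EX, ∀ f ∈ EX, (e * f) * (e * f) = e * f := by
    rintro e ⟨heX, hee⟩ f ⟨hfX, hff⟩
    obtain ⟨b, ⟨hbX, hb1, hb2⟩, hbu⟩ := hX (e * f) (mul_mem heX hfX)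
    -- c := f * b * e is also an inverse of e*f, hence equals b
    have hc1 : (e * f) * (f * (b * e)) * (e * f) = e * f := by
      simp only [mul_assoc] at hb1 ⊢
      rw [idem_step hff, idem_step hee]
      exact hb1
    have hc2 : (f * (b * e)) * (e * f) * (f * (b * e)) = f * (b * e) := by
      have hb2' := congrArg (· * e) hb2
      simp only [mul_assoc] at hb2' ⊢
      rw [idem_step hee, idem_step hff, hb2']
    have hcb : f * (b * e) = b :=
      hbu _ ⟨mul_mem hfX (mul_mem hbX heX), hc1, hc2⟩
    -- b is idempotent
    have hbb : b * b = b := by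
      have hb2' := congrArg (· * e) hb2
      simp only [mul_assoc] at hb2'
      calc b * b = (f * (b * e)) * (f * (b * e)) := by rw [hcb]
        _ = f * (b * (e * (f * (b * e)))) := by simp only [mul_assoc]
        _ = f * (b * e) := by rw [hb2']
        _ = b := hcb
    -- both e*f and b are inverses of b, hence e*f = b is idempotent
    obtain ⟨b', -, hbu'⟩ := hX b hbX
    have h1 : e * f = b' := hbu' _ ⟨mul_mem heX hfX, hb2, hb1⟩
    have h2 : b = b' := hbu' _ ⟨hbX, by rw [hbb, hbb], by rw [hbb, hbb]⟩
    rw [h1, ← h2, hbb]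
  -- idempotents of X commute
  have hEXcomm : ∀ e ∈ EX, ∀ f ∈ EX, e * f = f * e := by
    intro e he f hf
    obtain ⟨heX, hee⟩ := he
    obtain ⟨hfX, hff⟩ := hf
    have hef : (e * f) * (e * f) = e * f := hEXmulidem e ⟨heX, hee⟩ f ⟨hfX, hff⟩
    have hfe : (f * e) * (f * e) = f * e := hEXmulidem f ⟨hfX, hff⟩ e ⟨heX, hee⟩
    obtain ⟨b, -, hbu⟩ := hX (e * f) (mul_mem heX hfX)
    have h1 : e * f = b := hbu _ ⟨mul_mem heX hfX, by rw [hef, hef], by rw [hef, hef]⟩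
    have h2 : f * e = b := by
      refine hbu _ ⟨mul_mem hfX heX, ?_, ?_⟩
      · simp only [mul_assoc] at hef ⊢
        rw [idem_step hff, idem_step hee]
        exact hef
      · simp only [mul_assoc] at hfe ⊢
        rw [idem_step hee, idem_step hff]
        exact hfe
    rw [h1, h2]
  -- L := closure EX is a commutative set of idempotents closed under multiplication
  have hLmul : ∀ {x y : S}, x ∈ closure EX → y ∈ closure EX → x * y ∈ closure EX := by
    intro x y hx hy
    exact map_mem_closure₂ continuous_mul hx hy
      (fun a ha b hb => ⟨mul_mem ha.1 hb.1, hEXmulidem a ha b hb⟩)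
  have hLidem : ∀ x ∈ closure EX, x * x = x := fun x hx =>
    closure_minimal (fun e he => he.2)
      (isClosed_eq (continuous_id.mul continuous_id) continuous_id) hx
  have hLcomm : ∀ x ∈ closure EX, ∀ y ∈ closure EX, x * y = y * x := by
    intro x hx y hy
    have h : (x, y) ∈ closure (EX ×ˢ EX) := by
      rw [closure_prod_eq]; exact ⟨hx, hy⟩
    have hcl : IsClosed {p : S × S | p.1 * p.2 = p.2 * p.1} :=
      isClosed_eq (continuous_fst.mul continuous_snd) (continuous_snd.mul continuous_fst)
    exact closure_minimal (fun p hp => hEXcomm _ hp.1 _ hp.2) hcl h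
  -- for pairs in the closure of G, both products lie in L
  have hΓL : ∀ p ∈ closure G, p.1 * p.2 ∈ closure EX ∧ p.2 * p.1 ∈ closure EX := by
    intro p hp
    constructor
    · refine map_mem_closure (f := fun q : S × S => q.1 * q.2) (continuous_fst.mul continuous_snd) hp ?_
      rintro q ⟨hq1, hq2, hq3, hq4⟩
      refine ⟨mul_mem hq1 hq2, ?_⟩
      rw [mul_assoc, ← mul_assoc q.2 q.1 q.2, hq4]
    · refine map_mem_closure (f := fun q : S × S => q.2 * q.1) (continuous_snd.mul continuous_fst) hp ?_
      rintro q ⟨hq1, hq2, hq3, hq4⟩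
      refine ⟨mul_mem hq2 hq1, ?_⟩
      rw [mul_assoc, ← mul_assoc q.1 q.2 q.1, hq3]
  -- every idempotent of S belongs to L
  have hES : ∀ e : S, e * e = e → e ∈ closure EX := by
    intro e he
    obtain ⟨b, hb⟩ := hsurj e
    obtain ⟨h1, h2⟩ := hΓinv _ hb
    obtain ⟨hp, hq⟩ := hΓL _ hb
    simp only at h1 h2 hp hq
    have hbL : b ∈ closure EX := by
      have h := hLmul hq hp
      have heq : (b * e) * (e * b) = b := by
        rw [mul_assoc, ← mul_assoc e e b, he, ← mul_assoc]
        exact h2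
      rwa [heq] at h
    have hbb := hLidem _ hbL
    have h := hLmul hp hq
    have heq : (e * b) * (b * e) = e := by
      rw [mul_assoc, ← mul_assoc b b e, hbb, ← mul_assoc]
      exact h1
    rwa [heq] at h
  -- hence all idempotents of S commute
  have hcomm : ∀ e f : S, e * e = e → f * f = f → e * f = f * e :=
    fun e f he hf => hLcomm _ (hES e he) _ (hES f hf)
  -- choose the inverse
  choose i hi using hsurj
  have hinv : ∀ a : S, a * i a * a = a ∧ i a * a * i a = i a := fun a => hΓinv _ (hi a)
  -- uniqueness of inverses (Munn argument)
  have huniq : ∀ a y : S, a * y * a = a → y * a * y = y → y = i a := by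
    intro a c h1 h2
    obtain ⟨hb1, hb2⟩ := hinv a
    set b := i a with hbdef
    have hab : (a * b) * (a * b) = a * b := by rw [← mul_assoc, hb1]
    have hac : (a * c) * (a * c) = a * c := by rw [← mul_assoc, h1]
    have hba : (b * a) * (b * a) = b * a := by rw [← mul_assoc, hb2]
    have hca : (c * a) * (c * a) = c * a := by rw [← mul_assoc, h2]
    have e1 : b = b * (a * c) := by
      calc b = b * a * b := hb2.symm
        _ = b * ((a * c) * (a * b)) := by
              conv_lhs => rw [← h1]
              simp only [mul_assoc]
        _ = b * ((a * b) * (a * c)) := by rw [hcomm _ _ hac hab]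
        _ = (b * a * b) * (a * c) := by simp only [mul_assoc]
        _ = b * (a * c) := by rw [hb2]
    have e2 : c = b * (a * c) := by
      calc c = c * a * c := h2.symm
        _ = ((c * a) * (b * a)) * c := by
              conv_lhs => rw [← hb1]
              simp only [mul_assoc]
        _ = ((b * a) * (c * a)) * c := by rw [hcomm _ _ hca hba]
        _ = (b * a) * (c * a * c) := by simp only [mul_assoc]
        _ = b * (a * c) := by rw [h2, mul_assoc]
    rw [e2, ← e1]
  -- the closure of G is the graph of i
  have hgraph : ∀ p : S × S, p ∈ closure G → p.2 = i p.1 := fun p hp =>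
    huniq p.1 p.2 (hΓinv p hp).1 (hΓinv p hp).2
  -- continuity of i via compactness
  have hcont : Continuous i := by
    have hclosed : IsClosed (closure G) := isClosed_closure
    have hcs : CompactSpace (closure G) := isCompact_iff_compactSpace.mp hclosed.isCompact
    let e : closure G ≃ S :=
      { toFun := fun p => (p : S × S).1
        invFun := fun a => ⟨(a, i a), hi a⟩
        left_inv := fun p => by
          apply Subtype.ext
          exact Prod.ext rfl (hgraph _ p.2).symm
        right_inv := fun a => rfl }
    have he : Continuous e := continuous_fst.comp continuous_subtype_val
    let h := he.homeoOfEquivCompactToT2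
    have hieq : i = fun a => ((h.symm a : S × S)).2 := rfl
    rw [hieq]
    exact (continuous_snd.comp continuous_subtype_val).comp h.symm.continuous
  exact ⟨i, hcont, fun x => ⟨hinv x, fun y hy1 hy2 => huniq x y hy1 hy2⟩⟩
end

section
/- Let S be a countably compact sequential topological semigroup that contains a dense inverse subsemigroup. Then S is a topological inverse semigroup. -/
/-!
Let `E` be the set of idempotents of the dense inverse subsemigroup `X`; they form a commutative
subsemigroup, hence so does its closure `C`. The pairs `(x, y)` with `y` an inverse of `x` and
`xy, yx ∈ C` form a closed subset of `S × S`. Since `S` is sequentially compact (a countably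
compact sequential space is), its projection to the first factor is closed, and it contains `X`,
so it is all of `S`. An idempotent `e` with such an inverse `y` equals `y`, so every idempotent of
`S` lies in `C` and all idempotents commute, which makes inverses unique. The resulting inversion
map has a closed graph with values in a sequentially compact space, hence is continuous.
-/

open Topology Filter Set

/-- A space is countably compact if every infinite subset has an accumulation point. -/
def CountablyCompactSp (S : Type*) [TopologicalSpace S] : Prop :=
  ∀ A : Set S, A.Infinite → ∃ x : S, x ∈ closure (A \ {x})

theorem CountablyCompactSp.seqCompactSpace {X : Type*} [TopologicalSpace X] [T1Space X]
    [SequentialSpace X] (hcc : CountablyCompactSp X) : SeqCompactSpace X := by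
  refine ⟨fun u _ => ?_⟩
  suffices ∃ a, ∃ k : ℕ → ℕ, Tendsto k atTop atTop ∧ Tendsto (u ∘ k) atTop (𝓝 a) by
    obtain ⟨a, k, hk, hka⟩ := this
    obtain ⟨φ, hφ, hkφ⟩ := strictMono_subseq_of_tendsto_atTop hk
    exact ⟨a, mem_univ a, k ∘ φ, hkφ, hka.comp hφ.tendsto_atTop⟩
  rcases (range u).finite_or_infinite with hfin | hinf
  · obtain ⟨a, ha⟩ : ∃ a, (u ⁻¹' {a}).Infinite := by
      by_contra! h
      refine infinite_univ (α := ℕ) ?_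
      rw [← biUnion_range_preimage_singleton u]
      exact hfin.biUnion fun a _ => h a
    refine ⟨a, Nat.nth (· ∈ u ⁻¹' {a}), (Nat.nth_strictMono ha).tendsto_atTop, ?_⟩
    have hconst : u ∘ Nat.nth (· ∈ u ⁻¹' {a}) = fun _ => a :=
      funext fun n => Nat.nth_mem_of_infinite ha n
    rw [hconst]
    exact tendsto_const_nhds
  · obtain ⟨x, hx⟩ := hcc _ hinf
    have hnot : ¬ IsSeqClosed (range u \ {x}) := fun h => (h.isClosed.closure_subset hx).2 rfl
    obtain ⟨v, p, hv, hvp, hp⟩ : ∃ v p, (∀ n, v n ∈ range u \ {x}) ∧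
        Tendsto v atTop (𝓝 p) ∧ p ∉ range u \ {x} := by
      simpa [IsSeqClosed] using hnot
    choose k hk using fun n => (hv n).1
    have huk : u ∘ k = v := funext hk
    refine ⟨p, k, ?_, huk ▸ hvp⟩
    -- `u ∘ k` tends to `p` while avoiding it, so it eventually leaves every finite set
    have hvp' : Tendsto (u ∘ k) atTop (𝓝[≠] p) := huk ▸ tendsto_nhdsWithin_iff.2
      ⟨hvp, Eventually.of_forall fun n hn => hp (hn ▸ hv n)⟩
    have hk : Tendsto k atTop cofinite := (tendsto_comap_iff.2 hvp').mono_right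
      ((comap_mono (nhdsNE_le_cofinite p)).trans (comap_cofinite_le u))
    rwa [Nat.cofinite_eq_atTop] at hk

theorem isClosed_image_fst_of_seqCompactSpace {X Y : Type*} [TopologicalSpace X]
    [TopologicalSpace Y] [SequentialSpace X] [SeqCompactSpace Y] {K : Set (X × Y)}
    (hK : IsClosed K) : IsClosed (Prod.fst '' K) := by
  refine IsSeqClosed.isClosed fun x p hx hxp => ?_
  choose y hy using fun n => show ∃ y, (x n, y) ∈ K from by
    obtain ⟨⟨a, b⟩, hab, rfl⟩ := hx n; exact ⟨b, hab⟩
  obtain ⟨q, φ, hφ, hyq⟩ := SeqCompactSpace.tendsto_subseq y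
  exact ⟨(p, q), hK.mem_of_tendsto ((hxp.comp hφ.tendsto_atTop).prodMk_nhds hyq)
    (Eventually.of_forall fun n => hy (φ n)), rfl⟩

theorem continuous_of_isClosed_graph_of_seqCompactSpace {X Y : Type*} [TopologicalSpace X]
    [TopologicalSpace Y] [SequentialSpace X] [SeqCompactSpace Y] {f : X → Y}
    (hf : IsClosed {q : X × Y | q.2 = f q.1}) : Continuous f := by
  refine continuous_iff_seqContinuous.2 fun x p hxp => tendsto_of_subseq_tendsto fun ns hns => ?_
  obtain ⟨q, φ, hφ, hq⟩ := SeqCompactSpace.tendsto_subseq (f ∘ x ∘ ns)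
  have hxφ : Tendsto (x ∘ ns ∘ φ) atTop (𝓝 p) := hxp.comp (hns.comp hφ.tendsto_atTop)
  have hqp : q = f p := hf.mem_of_tendsto (hxφ.prodMk_nhds hq) (Eventually.of_forall fun n => rfl)
  exact ⟨φ, hqp ▸ hq⟩

section Algebra

variable {T : Type*} [Semigroup T]

def IsInverse (x y : T) : Prop := x * y * x = x ∧ y * x * y = y

theorem IsInverse.symm {x y : T} (h : IsInverse x y) : IsInverse y x := ⟨h.2, h.1⟩

theorem IsInverse.isIdempotentElem_mul {x y : T} (h : IsInverse x y) :
    IsIdempotentElem (x * y) := by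
  rw [IsIdempotentElem, ← mul_assoc, h.1]

theorem IsIdempotentElem.isInverse_self {e : T} (he : IsIdempotentElem e) : IsInverse e e := by
  simp only [IsInverse, he.eq, and_self]

theorem IsIdempotentElem.mul_of_existsUnique_isInverse (hu : ∀ x : T, ∃! y, IsInverse x y)
    {e f : T} (he : IsIdempotentElem e) (hf : IsIdempotentElem f) :
    IsIdempotentElem (e * f) := by
  obtain ⟨g, hg, -⟩ := hu (e * f)
  -- `f * g * e` is an idempotent inverse of `e * f`
  have hq : IsIdempotentElem (f * g * e) :=
    calc f * g * e * (f * g * e) = f * (g * (e * f) * g) * e := by simp only [mul_assoc]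
      _ = f * g * e := by rw [hg.2]
  have hinv : IsInverse (f * g * e) (e * f) := by
    constructor
    · calc f * g * e * (e * f) * (f * g * e) = f * (g * (e * f) * g) * e := by
            simp only [mul_assoc, he.mul_self_mul, hf.mul_self_mul]
        _ = f * g * e := by rw [hg.2]
    · calc e * f * (f * g * e) * (e * f) = e * f * g * (e * f) := by
            simp only [mul_assoc, he.mul_self_mul, hf.mul_self_mul]
        _ = e * f := hg.1
  rw [(hu _).unique hinv hq.isInverse_self]
  exact hq

theorem IsIdempotentElem.commute_of_existsUnique_isInverse (hu : ∀ x : T, ∃! y, IsInverse x y)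
    {e f : T} (he : IsIdempotentElem e) (hf : IsIdempotentElem f) : Commute e f := by
  have hef := he.mul_of_existsUnique_isInverse hu hf
  have hfe := hf.mul_of_existsUnique_isInverse hu he
  have hinv : IsInverse (e * f) (f * e) := by
    constructor
    · calc e * f * (f * e) * (e * f) = e * f * (e * f) := by
            simp only [mul_assoc, he.mul_self_mul, hf.mul_self_mul]
        _ = e * f := hef.eq
    · calc f * e * (e * f) * (f * e) = f * e * (f * e) := by
            simp only [mul_assoc, he.mul_self_mul, hf.mul_self_mul]
        _ = f * e := hfe.eq
  exact (hu _).unique hef.isInverse_self hinv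

theorem IsInverse.eq_of_commute
    (hcomm : ∀ e f : T, IsIdempotentElem e → IsIdempotentElem f → Commute e f)
    {x y z : T} (hy : IsInverse x y) (hz : IsInverse x z) : y = z :=
  calc y = y * x * y := hy.2.symm
    _ = y * (x * z * x) * y := by rw [hz.1]
    _ = y * x * (z * x) * y := by simp only [mul_assoc]
    _ = z * x * (y * x) * y := by
      rw [(hcomm _ _ hy.symm.isIdempotentElem_mul hz.symm.isIdempotentElem_mul).eq]
    _ = z * x * (y * x * y) := by simp only [mul_assoc]
    _ = z * x * z * (x * y) := by rw [hy.2, hz.2, mul_assoc]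
    _ = z * (x * z * (x * y)) := by simp only [mul_assoc]
    _ = z * (x * y * (x * z)) := by
      rw [(hcomm _ _ hz.isIdempotentElem_mul hy.isIdempotentElem_mul).eq]
    _ = z * (x * y * x) * z := by simp only [mul_assoc]
    _ = z := by rw [hy.1, hz.2]

end Algebra

structure IsSemilattice {S : Type*} [Mul S] (C : Set S) : Prop where
  mul_mem : ∀ ⦃a b⦄, a ∈ C → b ∈ C → a * b ∈ C
  isIdempotentElem : ∀ ⦃e⦄, e ∈ C → IsIdempotentElem e
  commute : ∀ ⦃a b⦄, a ∈ C → b ∈ C → Commute a b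

theorem Subsemigroup.isSemilattice_idempotents {S : Type*} [Semigroup S] (X : Subsemigroup S)
    (hX : ∀ x ∈ X, ∃! y : S, y ∈ X ∧ x * y * x = x ∧ y * x * y = y) :
    IsSemilattice {e | e ∈ X ∧ IsIdempotentElem e} := by
  have hu : ∀ x : X, ∃! y : X, IsInverse x y := by
    rintro ⟨x, hx⟩
    obtain ⟨y, ⟨hyX, hy⟩, huniq⟩ := hX x hx
    exact ⟨⟨y, hyX⟩, ⟨Subtype.ext hy.1, Subtype.ext hy.2⟩, fun z hz =>
      Subtype.ext (huniq z ⟨z.2, congrArg Subtype.val hz.1, congrArg Subtype.val hz.2⟩)⟩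
  have lift {e : S} (he : e ∈ X ∧ IsIdempotentElem e) : IsIdempotentElem (⟨e, he.1⟩ : X) :=
    Subtype.ext he.2
  refine ⟨fun e f he hf => ⟨X.mul_mem he.1 hf.1, ?_⟩, fun e he => he.2, fun e f he hf => ?_⟩
  · exact congrArg Subtype.val ((lift he).mul_of_existsUnique_isInverse hu (lift hf))
  · exact congrArg Subtype.val ((lift he).commute_of_existsUnique_isInverse hu (lift hf))

theorem IsSemilattice.mem_of_isIdempotentElem {S : Type*} [Semigroup S] {C : Set S}
    (hC : IsSemilattice C) {e y : S} (he : IsIdempotentElem e) (hy : IsInverse e y)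
    (hey : e * y ∈ C) (hye : y * e ∈ C) : e ∈ C := by
  have hyC : y ∈ C := by
    have : y * e * (e * y) = y := by rw [mul_assoc, he.mul_self_mul, ← mul_assoc, hy.2]
    exact this ▸ hC.mul_mem hye hey
  have hey' : e = y :=
    calc e = e * y * (y * e) := by
          rw [mul_assoc, (hC.isIdempotentElem hyC).mul_self_mul, ← mul_assoc, hy.1]
      _ = y * e * (e * y) := (hC.commute hey hye).eq
      _ = y := by rw [mul_assoc, he.mul_self_mul, ← mul_assoc, hy.2]
  exact hey' ▸ hyC

section TopologicalSemigroup

variable {S : Type*} [TopologicalSpace S] [T2Space S]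

theorem IsSemilattice.closure [Mul S] [ContinuousMul S] {C : Set S} (hC : IsSemilattice C) :
    IsSemilattice (closure C) where
  mul_mem _ _ ha hb := map_mem_closure₂ continuous_mul ha hb fun _ ha _ hb => hC.mul_mem ha hb
  isIdempotentElem _ he := closure_minimal (fun _ he => hC.isIdempotentElem he)
    (isClosed_eq (continuous_id.mul continuous_id) continuous_id) he
  commute a b ha hb := eqOn_closure₂' (fun _ ha _ hb => hC.commute ha hb) continuous_const_mul
    continuous_mul_const continuous_mul_const continuous_const_mul a ha b hb

variable [Semigroup S] [ContinuousMul S]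

theorem isClosed_setOf_isInverse : IsClosed {q : S × S | IsInverse q.1 q.2} :=
  (isClosed_eq (by fun_prop) (by fun_prop)).inter (isClosed_eq (by fun_prop) (by fun_prop))

theorem exists_isInverse_mul_mem_of_dense [SequentialSpace S] [SeqCompactSpace S] {X : Set S}
    (hdense : Dense X) {C : Set S} (hC : IsClosed C)
    (hXC : ∀ x ∈ X, ∃ y, IsInverse x y ∧ x * y ∈ C ∧ y * x ∈ C) (x : S) :
    ∃ y, IsInverse x y ∧ x * y ∈ C ∧ y * x ∈ C := by
  let K : Set (S × S) := {q | IsInverse q.1 q.2 ∧ q.1 * q.2 ∈ C ∧ q.2 * q.1 ∈ C}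
  have hK : IsClosed K := isClosed_setOf_isInverse.inter
    ((hC.preimage continuous_mul).inter (hC.preimage (continuous_snd.mul continuous_fst)))
  have hXK : X ⊆ Prod.fst '' K := fun x hx => let ⟨y, hy⟩ := hXC x hx; ⟨(x, y), hy, rfl⟩
  obtain ⟨⟨_, y⟩, hy, rfl⟩ :=
    (isClosed_image_fst_of_seqCompactSpace hK).closure_subset_iff.2 hXK (hdense x)
  exact ⟨y, hy⟩

end TopologicalSemigroup

/-- A countably compact sequential (Hausdorff) topological semigroup containing a dense inverse
subsemigroup is a topological inverse semigroup. -/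
theorem countablyCompact_sequential_dense_inverse_subsemigroup {S : Type*} [Semigroup S]
    [TopologicalSpace S] [T2Space S] [SequentialSpace S] [ContinuousMul S]
    (hcc : CountablyCompactSp S)
    (X : Subsemigroup S)
    (hdense : Dense (X : Set S))
    (hX : ∀ x ∈ X, ∃! y : S, y ∈ X ∧ x * y * x = x ∧ y * x * y = y) :
    ∃ i : S → S, Continuous i ∧
      ∀ x : S, (x * i x * x = x ∧ i x * x * i x = i x) ∧
        ∀ y : S, x * y * x = x → y * x * y = y → y = i x := by
  have := hcc.seqCompactSpace
  set C := closure {e | e ∈ X ∧ IsIdempotentElem e}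
  have hC : IsSemilattice C := (X.isSemilattice_idempotents hX).closure
  have hXC : ∀ x ∈ X, ∃ y, IsInverse x y ∧ x * y ∈ C ∧ y * x ∈ C := by
    intro x hx
    obtain ⟨y, ⟨hyX, hy : IsInverse x y⟩, -⟩ := hX x hx
    exact ⟨y, hy, subset_closure ⟨X.mul_mem hx hyX, hy.isIdempotentElem_mul⟩,
      subset_closure ⟨X.mul_mem hyX hx, hy.symm.isIdempotentElem_mul⟩⟩
  choose i hi using exists_isInverse_mul_mem_of_dense hdense isClosed_closure hXC
  have hidem {e : S} (he : IsIdempotentElem e) : e ∈ C :=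
    hC.mem_of_isIdempotentElem he (hi e).1 (hi e).2.1 (hi e).2.2
  have hinv (x y : S) : IsInverse x y ↔ y = i x :=
    ⟨fun h => h.eq_of_commute (fun _ _ he hf => hC.commute (hidem he) (hidem hf)) (hi x).1,
      fun h => h ▸ (hi x).1⟩
  refine ⟨i, continuous_of_isClosed_graph_of_seqCompactSpace ?_,
    fun x => ⟨(hi x).1, fun y h1 h2 => (hinv x y).1 ⟨h1, h2⟩⟩⟩
  have hgraph : {q : S × S | IsInverse q.1 q.2} = {q | q.2 = i q.1} :=
    Set.ext fun q => hinv q.1 q.2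
  exact hgraph ▸ isClosed_setOf_isInverse
end

section
/- Every inverse semigroup S equipped with a Hausdorff topology making all left and right translations continuous (a semitopological semigroup) that is topologically periodic is a Clifford semigroup, i.e., xx⁻¹ = x⁻¹x for all x ∈ S. -/
open Topology

/-- `sPow x n = x ^ (n + 1)` in a semigroup. -/
def sPow {S : Type*} [Semigroup S] (x : S) : ℕ → S
  | 0 => x
  | n + 1 => sPow x n * x

/-- In an inverse semigroup, the product of two idempotents is idempotent. -/
theorem idem_mul_idem {S : Type*} [Semigroup S] (inv : S → S)
    (hinv : ∀ x : S, x * inv x * x = x ∧ inv x * x * inv x = inv x)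
    (huniq : ∀ x y : S, x * y * x = x → y * x * y = y → y = inv x)
    {p q : S} (hp : p * p = p) (hq : q * q = q) : (p * q) * (p * q) = p * q := by
  have h1 : (p * q) * inv (p * q) * (p * q) = p * q := (hinv (p * q)).1
  have h2 : inv (p * q) * (p * q) * inv (p * q) = inv (p * q) := (hinv (p * q)).2
  set s := inv (p * q) with hs
  have hzq : (p * q) * q = p * q := by rw [mul_assoc, hq]
  have hpz : p * (p * q) = p * q := by rw [← mul_assoc, hp]
  have hmid : s * ((p * q) * s) = s := by rw [← mul_assoc]; exact h2
  have hA : (p * q) * (q * (s * p)) * (p * q) = p * q := by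
    calc (p * q) * (q * (s * p)) * (p * q)
        = ((p * q) * q) * ((s * p) * (p * q)) := by simp only [mul_assoc]
      _ = (p * q) * (s * (p * (p * q))) := by rw [hzq]; simp only [mul_assoc]
      _ = (p * q) * (s * (p * q)) := by rw [hpz]
      _ = p * q := by rw [← mul_assoc]; exact h1
  have hB : (q * (s * p)) * (p * q) * (q * (s * p)) = q * (s * p) := by
    calc (q * (s * p)) * (p * q) * (q * (s * p))
        = q * (s * ((p * (p * q)) * (q * (s * p)))) := by simp only [mul_assoc]
      _ = q * (s * ((p * q) * (q * (s * p)))) := by rw [hpz]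
      _ = q * (s * (((p * q) * q) * (s * p))) := by simp only [mul_assoc]
      _ = q * (s * ((p * q) * (s * p))) := by rw [hzq]
      _ = q * ((s * ((p * q) * s)) * p) := by simp only [mul_assoc]
      _ = q * (s * p) := by rw [hmid]
  have hy : q * (s * p) = s := by
    have := huniq (p * q) (q * (s * p)) hA hB
    rw [this, ← hs]
  have hss : s * s = s := by
    calc s * s = (q * (s * p)) * (q * (s * p)) := by rw [hy]
      _ = q * ((s * ((p * q) * s)) * p) := by simp only [mul_assoc]
      _ = q * (s * p) := by rw [hmid]
      _ = s := hy
  have hsinv : s = inv s := huniq s s (by rw [hss, hss]) (by rw [hss, hss])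
  have hzs : p * q = s := by
    have h7 := huniq s (p * q) h2 h1
    rw [h7, ← hsinv]
  rw [hzs, hss]

/-- In an inverse semigroup, idempotents commute. -/
theorem idem_comm {S : Type*} [Semigroup S] (inv : S → S)
    (hinv : ∀ x : S, x * inv x * x = x ∧ inv x * x * inv x = inv x)
    (huniq : ∀ x y : S, x * y * x = x → y * x * y = y → y = inv x)
    {p q : S} (hp : p * p = p) (hq : q * q = q) : p * q = q * p := by
  have hpq := idem_mul_idem inv hinv huniq hp hq
  have hqp := idem_mul_idem inv hinv huniq hq hp
  have hA : (p * q) * (q * p) * (p * q) = p * q := by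
    calc (p * q) * (q * p) * (p * q)
        = (p * (q * q)) * ((p * p) * q) := by simp only [mul_assoc]
      _ = (p * q) * (p * q) := by rw [hq, hp]
      _ = p * q := hpq
  have hB : (q * p) * (p * q) * (q * p) = q * p := by
    calc (q * p) * (p * q) * (q * p)
        = (q * (p * p)) * ((q * q) * p) := by simp only [mul_assoc]
      _ = (q * p) * (q * p) := by rw [hp, hq]
      _ = q * p := hqp
  have h3 : q * p = inv (p * q) := huniq (p * q) (q * p) hA hB
  have h4 : p * q = inv (p * q) := huniq (p * q) (p * q) (by rw [hpq, hpq]) (by rw [hpq, hpq])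
  rw [h3, ← h4]

/-- Every topologically periodic inverse semitopological semigroup (Hausdorff, with all left and
right translations continuous) is Clifford: `x * x⁻¹ = x⁻¹ * x` for all `x`.
Topological periodicity: every neighborhood of `x` contains `x ^ n` for some `n ≥ 2`. -/
theorem clifford_of_topologically_periodic {S : Type*} [Semigroup S] [TopologicalSpace S]
    [T2Space S]
    (hl : ∀ s : S, Continuous fun x => s * x)
    (hr : ∀ s : S, Continuous fun x => x * s)
    (inv : S → S)
    (hinv : ∀ x : S, x * inv x * x = x ∧ inv x * x * inv x = inv x)
    (huniq : ∀ x y : S, x * y * x = x → y * x * y = y → y = inv x)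
    (hper : ∀ x : S, ∀ U ∈ 𝓝 x, ∃ n : ℕ, 1 ≤ n ∧ sPow x n ∈ U) :
    ∀ x : S, x * inv x = inv x * x := by
  intro x
  obtain ⟨h1, h2⟩ := hinv x
  set i := inv x with hi
  -- h1 : x * i * x = x,  h2 : i * x * i = i
  have he : (x * i) * (x * i) = x * i := by rw [← mul_assoc, h1]
  have hf : (i * x) * (i * x) = i * x := by rw [← mul_assoc, h2]
  have hcomm : (x * i) * (i * x) = (i * x) * (x * i) := idem_comm inv hinv huniq he hf
  have hfx : x * (i * x) = x := by rw [← mul_assoc]; exact h1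
  -- the key von Neumann identity : x² x⁻² x² = x²
  have J : ((x * x) * (i * i)) * (x * x) = x * x := by
    calc ((x * x) * (i * i)) * (x * x)
        = x * (((x * i) * (i * x)) * x) := by simp only [mul_assoc]
      _ = x * (((i * x) * (x * i)) * x) := by rw [hcomm]
      _ = x * ((i * x) * ((x * i) * x)) := by rw [mul_assoc]
      _ = x * ((i * x) * x) := by rw [h1]
      _ = x * x := by rw [← mul_assoc, hfx]
  have J' : (x * x) * ((i * i) * (x * x)) = x * x := by rw [← mul_assoc]; exact J
  have spow_succ' : ∀ n, sPow x (n + 1) = x * sPow x n := by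
    intro n
    induction n with
    | zero => rfl
    | succ n ih =>
      show sPow x (n + 1) * x = x * (sPow x n * x)
      rw [ih, mul_assoc]
  have claimL : ∀ n, 1 ≤ n → ((x * x) * (i * i)) * sPow x n = sPow x n := by
    intro n hn
    induction n, hn using Nat.le_induction with
    | base => exact J
    | succ n hn ih =>
      show ((x * x) * (i * i)) * (sPow x n * x) = sPow x n * x
      rw [← mul_assoc, ih]
  have claimR : ∀ n, 1 ≤ n → sPow x n * ((i * i) * (x * x)) = sPow x n := by
    intro n hn
    induction n, hn using Nat.le_induction with
    | base => exact J'
    | succ n hn ih =>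
      rw [spow_succ' n, mul_assoc, ih]
  have hxmem : x ∈ closure {y : S | ∃ n, 1 ≤ n ∧ sPow x n = y} := by
    rw [mem_closure_iff_nhds]
    intro U hU
    obtain ⟨n, hn, hnU⟩ := hper x U hU
    exact ⟨sPow x n, hnU, n, hn, rfl⟩
  have hgx : ((x * x) * (i * i)) * x = x := by
    have hclosed : IsClosed {y : S | ((x * x) * (i * i)) * y = y} :=
      isClosed_eq (hl _) continuous_id
    have hsub : {y : S | ∃ n, 1 ≤ n ∧ sPow x n = y} ⊆ {y : S | ((x * x) * (i * i)) * y = y} := by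
      rintro y ⟨n, hn, rfl⟩
      exact claimL n hn
    exact closure_minimal hsub hclosed hxmem
  have hxh : x * ((i * i) * (x * x)) = x := by
    have hclosed : IsClosed {y : S | y * ((i * i) * (x * x)) = y} :=
      isClosed_eq (hr _) continuous_id
    have hsub : {y : S | ∃ n, 1 ≤ n ∧ sPow x n = y} ⊆
        {y : S | y * ((i * i) * (x * x)) = y} := by
      rintro y ⟨n, hn, rfl⟩
      exact claimR n hn
    exact closure_minimal hsub hclosed hxmem
  --从 hgx : multiply by i on the left :  f e f = f
  have h5 : (i * x) * ((x * i) * (i * x)) = i * x := by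
    have h' := congrArg (fun y => i * y) hgx
    simpa only [mul_assoc] using h'
  -- from hxh : multiply by i on the right :  e f e = e
  have h6 : (x * i) * ((i * x) * (x * i)) = x * i := by
    have h' := congrArg (fun y => y * i) hxh
    simpa only [mul_assoc] using h'
  have hFeq : i * x = (i * x) * (x * i) := by
    conv_lhs => rw [← h5]
    rw [hcomm, ← mul_assoc, hf]
  have hEeq : x * i = (x * i) * (i * x) := by
    conv_lhs => rw [← h6]
    rw [← hcomm, ← mul_assoc, he]
  rw [hEeq, hcomm, ← hFeq]
end

section
/- In any semitopological semilattice (a Hausdorff space with a separately continuous commutative idempotent multiplication), the closure of a chain (with respect to the natural partial order) is again a chain. -/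
/-- In a Hausdorff semitopological semilattice (all translations `x ↦ s ⊓ x` continuous),
the closure of a chain is again a chain. -/
theorem closure_chain_isChain {X : Type*} [SemilatticeInf X] [TopologicalSpace X] [T2Space X]
    (hcont : ∀ s : X, Continuous fun x => s ⊓ x)
    (L : Set X) (hL : IsChain (· ≤ ·) L) :
    IsChain (· ≤ ·) (closure L) := by
  have key : ∀ b : X, IsClosed {x : X | b ⊓ x = x ∨ b ⊓ x = b} := fun b =>
    (isClosed_eq (hcont b) continuous_id).union (isClosed_eq (hcont b) continuous_const)
  have step1 : ∀ a ∈ L, ∀ b ∈ closure L, a ⊓ b = b ∨ a ⊓ b = a := by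
    intro a ha b hb
    have hsub : L ⊆ {x : X | a ⊓ x = x ∨ a ⊓ x = a} := by
      intro x hx
      rcases eq_or_ne a x with rfl | hne
      · right; exact inf_idem a
      · rcases hL ha hx hne with h | h
        · right; exact inf_eq_left.mpr h
        · left; exact inf_eq_right.mpr h
    exact (key a).closure_subset_iff.mpr hsub hb
  intro x hx y hy _
  have hsub : L ⊆ {z : X | y ⊓ z = z ∨ y ⊓ z = y} := by
    intro a ha
    rcases step1 a ha y hy with h | h
    · right; rw [inf_comm]; exact h
    · left; rw [inf_comm]; exact h
  rcases (key y).closure_subset_iff.mpr hsub hx with h | h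
  · exact Or.inl (inf_eq_right.mp h)
  · exact Or.inr (inf_eq_left.mp h)
end

section
/- Let X be a countably tight Hausdorff semitopological semilattice and L ⊆ X a chain order-isomorphic to ω₁ with the minimum operation. Then the closure of L in X is not compact. -/
/-- A space is countably tight if every point of the closure of a set lies in the closure of
a countable subset. -/
def CountablyTight (X : Type*) [TopologicalSpace X] : Prop :=
  ∀ (A : Set X) (x : X), x ∈ closure A → ∃ B ⊆ A, B.Countable ∧ x ∈ closure B

/-!
A compact closure of `L` would contain an upper bound `y` of `L`, since in a semitopological
semilattice the sets `Ici a` and `Iic a` are closed. By countable tightness `y` is a limit of a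
countable `B ⊆ L`; in `ω₁` the set `B` is bounded above by some `c ∈ L`, so `y ≤ c`, which
contradicts `c < d ≤ y` for any `d ∈ L` above `c`.
-/

open Set Cardinal

section SemitopologicalSemilattice

variable {X : Type*} [SemilatticeInf X] [TopologicalSpace X]

theorem closedIciTopology_of_continuous_inf [T1Space X]
    (hcont : ∀ s : X, Continuous fun x => s ⊓ x) : ClosedIciTopology X where
  isClosed_Ici a := by
    have : Ici a = (a ⊓ ·) ⁻¹' {a} := by ext; simp
    exact this ▸ isClosed_singleton.preimage (hcont a)

theorem closedIicTopology_of_continuous_inf [T2Space X]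
    (hcont : ∀ s : X, Continuous fun x => s ⊓ x) : ClosedIicTopology X where
  isClosed_Iic a := by
    have : Iic a = {x | a ⊓ x = x} := by ext; simp
    exact this ▸ isClosed_eq (hcont a) continuous_id

end SemitopologicalSemilattice

theorem IsCompact.exists_mem_upperBounds_of_directedOn {X : Type*} [Preorder X]
    [TopologicalSpace X] [ClosedIciTopology X] {K S : Set X} (hK : IsCompact K) (hSK : S ⊆ K)
    (hS : DirectedOn (· ≤ ·) S) (hne : S.Nonempty) : ∃ y ∈ K, y ∈ upperBounds S := by
  have : Nonempty S := hne.to_subtype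
  by_contra! h
  obtain ⟨a, ha⟩ := hK.elim_directed_family_closed (fun a : S => Ici (a : X))
    (fun _ => isClosed_Ici)
    (eq_empty_of_forall_notMem fun y ⟨hyK, hy⟩ => h y hyK fun a ha => mem_iInter.1 hy ⟨a, ha⟩)
    (fun a b => by
      obtain ⟨c, hcS, hac, hbc⟩ := hS a a.2 b b.2
      exact ⟨⟨c, hcS⟩, Ici_subset_Ici.2 hac, Ici_subset_Ici.2 hbc⟩)
  exact ha.subset ⟨hSK a.2, le_rfl⟩

theorem not_isCompact_closure_of_forall_countable_exists_gt {X : Type*} [Preorder X]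
    [TopologicalSpace X] [ClosedIciTopology X] [ClosedIicTopology X] (htight : CountablyTight X)
    {L : Set X} (hL : ∀ B ⊆ L, B.Countable → ∃ c ∈ L, ∀ b ∈ B, b < c) :
    ¬IsCompact (closure L) := by
  intro hK
  have hdir : DirectedOn (· ≤ ·) L := fun a ha b hb => by
    obtain ⟨c, hcL, hc⟩ := hL {a, b} (pair_subset ha hb) (toFinite _).countable
    exact ⟨c, hcL, (hc a (mem_insert a _)).le, (hc b (mem_insert_of_mem a rfl)).le⟩
  have hne : L.Nonempty := by
    obtain ⟨c, hcL, -⟩ := hL ∅ (empty_subset _) countable_empty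
    exact ⟨c, hcL⟩
  obtain ⟨y, hyL, hyub⟩ := hK.exists_mem_upperBounds_of_directedOn subset_closure hdir hne
  obtain ⟨B, hBL, hB, hyB⟩ := htight L y hyL
  obtain ⟨c, hcL, hBc⟩ := hL B hBL hB
  obtain ⟨d, hdL, hcd⟩ := hL {c} (singleton_subset_iff.2 hcL) (countable_singleton c)
  have hyc : y ≤ c := closure_minimal (fun b hb => (hBc b hb).le) isClosed_Iic hyB
  exact (hcd c rfl).not_ge ((hyub hdL).trans hyc)

theorem OrderIso.exists_gt_of_countable {α X : Type*} [Preorder α] [Preorder X] {L : Set X}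
    (e : α ≃o L) (h : ∀ s : Set α, s.Countable → ∃ c, ∀ a ∈ s, a < c) :
    ∀ B ⊆ L, B.Countable → ∃ c ∈ L, ∀ b ∈ B, b < c := by
  intro B hBL hB
  obtain ⟨c, hc⟩ := h (e ⁻¹' (Subtype.val ⁻¹' B))
    ((hB.preimage Subtype.val_injective).preimage e.injective)
  refine ⟨e c, (e c).2, fun b hb => ?_⟩
  have : e.symm ⟨b, hBL hb⟩ < c := hc _ (by simpa using hb)
  exact e.symm_apply_lt.1 this

theorem Ordinal.exists_gt_of_countable_of_aleph0_lt_cof {o : Ordinal} (ho : ℵ₀ < o.cof)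
    {s : Set (Iio o)} (hs : s.Countable) : ∃ c : Iio o, ∀ a ∈ s, a < c := by
  have hbound : ⨆ a : s, (a : Ordinal) + 1 < o := by
    refine lift_iSup_add_one_lt_of_lt_cof ?_ fun a => a.1.2
    rw [← lift_cof]
    exact (lift_le_aleph0.2 hs.le_aleph0).trans_lt (aleph0_lt_lift.2 ho)
  refine ⟨⟨_, hbound⟩, fun a ha => ?_⟩
  show (a : Ordinal) < _
  exact (lt_add_one _).trans_le (Ordinal.le_iSup (fun a : s => (a : Ordinal) + 1) ⟨a, ha⟩)

/-- In a countably tight Hausdorff semitopological semilattice, the closure of a chain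
order-isomorphic to `(ω₁, min)` is not compact. -/
theorem closure_omega1_chain_not_compact {X : Type*} [SemilatticeInf X] [TopologicalSpace X]
    [T2Space X]
    (hcont : ∀ s : X, Continuous fun x => s ⊓ x)
    (htight : CountablyTight X)
    (L : Set X)
    (hiso : Nonempty ((Set.Iio (Cardinal.aleph 1).ord) ≃o L)) :
    ¬ IsCompact (closure L) := by
  obtain ⟨e⟩ := hiso
  have : ClosedIciTopology X := closedIciTopology_of_continuous_inf hcont
  have : ClosedIicTopology X := closedIicTopology_of_continuous_inf hcont
  have hcof : ℵ₀ < (aleph 1).ord.cof := by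
    rw [isRegular_aleph_one.cof_ord]
    exact aleph0_lt_aleph_one
  exact not_isCompact_closure_of_forall_countable_exists_gt htight
    (e.exists_gt_of_countable fun _ => Ordinal.exists_gt_of_countable_of_aleph0_lt_cof hcof)
end

section
/- Let X be a countably tight Hausdorff semitopological semilattice and L ⊆ X a chain order-isomorphic to (ω₁, min). Then I_L = {x ∈ X : xL is countable} is a closed ideal of X. -/
open Cardinal Set

section CountableLowerSets

variable {α : Type*} [LinearOrder α] [Uncountable α]

theorem exists_forall_le_of_countable (hIic : ∀ a : α, (Iic a).Countable) {s : Set α}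
    (hs : s.Countable) : ∃ a, ∀ b ∈ s, b ≤ a := by
  obtain ⟨a, ha⟩ : ∃ a, a ∉ ⋃ b ∈ s, Iic b := by
    by_contra! h
    exact not_countable_univ ((hs.biUnion fun b _ => hIic b).mono fun a _ => h a)
  simp only [mem_iUnion, mem_Iic, not_exists, not_le] at ha
  exact ⟨a, fun b hb => (ha b hb).le⟩

theorem Monotone.exists_forall_ge_eq_of_countable_range {β : Type*} [PartialOrder β]
    (hIic : ∀ a : α, (Iic a).Countable) {f : α → β} (hf : Monotone f)
    (hrange : (range f).Countable) : ∃ a, ∀ b, a ≤ b → f b = f a := by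
  obtain ⟨c, hc⟩ : ∃ c, ¬ (f ⁻¹' {c}).Countable := by
    by_contra! h
    exact not_countable_univ (biUnion_range_preimage_singleton f ▸ hrange.biUnion fun c _ => h c)
  obtain ⟨a, rfl⟩ : ∃ a, f a = c := by
    by_contra! h
    exact hc (by simp [preimage, h])
  refine ⟨a, fun b hab => le_antisymm ?_ (hf hab)⟩
  -- the uncountable fibre over `f a` reaches beyond the countable set `Iic b`
  obtain ⟨d, hd, hbd⟩ := not_subset.mp fun h => hc ((hIic b).mono h)
  calc f b ≤ f d := hf (le_of_not_ge hbd)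
    _ = f a := hd

end CountableLowerSets

theorem countable_range_of_forall_ge_eq {α β : Type*} [LinearOrder α]
    (hIic : ∀ a : α, (Iic a).Countable) {f : α → β} {a : α} (h : ∀ b, a ≤ b → f b = f a) :
    (range f).Countable := by
  refine (((hIic a).image f).union (countable_singleton (f a))).mono ?_
  rintro _ ⟨b, rfl⟩
  rcases le_total b a with hba | hab
  · exact Or.inl ⟨b, hba, rfl⟩
  · exact Or.inr (h b hab)

section OmegaOne

theorem countable_Iio_of_lt_ord_aleph_one {o : Ordinal} (h : o < (aleph 1).ord) :
    (Iio o).Countable := by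
  rw [← le_aleph0_iff_set_countable, mk_Iio_ordinal, lift_le_aleph0, ← lt_aleph_one_iff]
  exact lt_ord.mp h

instance : Uncountable (Iio (aleph 1).ord) := by
  refine ⟨fun h => ?_⟩
  rw [countable_coe_iff, ← le_aleph0_iff_set_countable, mk_Iio_ordinal, card_ord, lift_le_aleph0,
    ← lt_aleph_one_iff] at h
  exact lt_irrefl _ h

theorem countable_Iic_Iio_ord_aleph_one (a : Iio (aleph 1).ord) : (Iic a).Countable := by
  have hsucc : Order.succ (a : Ordinal) < (aleph 1).ord :=
    (isSuccLimit_ord aleph0_lt_aleph_one.le).succ_lt a.2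
  refine ((countable_Iio_of_lt_ord_aleph_one hsucc).preimage Subtype.val_injective).mono ?_
  intro b (hb : (b : Ordinal) ≤ a)
  exact hb.trans_lt (Order.lt_succ _)

end OmegaOne

section Semilattice

variable {X : Type*} [SemilatticeInf X]

/-- The set `I_L`. -/
def infCountableSet (L : Set X) : Set X := {x | ((fun l => x ⊓ l) '' L).Countable}

theorem mem_infCountableSet_range {α : Type*} {e : α → X} {x : X} :
    x ∈ infCountableSet (range e) ↔ (range fun a => x ⊓ e a).Countable := by
  rw [infCountableSet, mem_ofPred_eq, ← range_comp]
  rfl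

theorem inf_mem_infCountableSet {L : Set X} (a : X) {y : X} (hy : y ∈ infCountableSet L) :
    a ⊓ y ∈ infCountableSet L := by
  refine (hy.image (a ⊓ ·)).mono ?_
  rintro _ ⟨l, hl, rfl⟩
  exact ⟨y ⊓ l, mem_image_of_mem _ hl, (inf_assoc a y l).symm⟩

theorem range_subset_infCountableSet {α : Type*} [LinearOrder α]
    (hIic : ∀ a : α, (Iic a).Countable) {e : α → X} (he : Monotone e) :
    range e ⊆ infCountableSet (range e) := by
  rintro _ ⟨a, rfl⟩
  refine ((hIic a).image e).mono ?_
  rintro _ ⟨_, ⟨b, rfl⟩, rfl⟩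
  exact ⟨min a b, min_le_left a b, he.map_inf a b⟩

variable [TopologicalSpace X] [T2Space X]

theorem isClosed_Iic_of_continuous_inf (hcont : ∀ s : X, Continuous (s ⊓ ·)) (t : X) :
    IsClosed (Iic t) := by
  have hIic : Iic t = {u | t ⊓ u = id u} := by ext u; exact inf_eq_right.symm
  exact hIic ▸ isClosed_eq (hcont t) continuous_id

theorem inf_le_of_mem_closure (hcont : ∀ s : X, Continuous (s ⊓ ·)) {B : Set X} {x s t : X}
    (hx : x ∈ closure B) (h : ∀ b ∈ B, s ⊓ b ≤ t) : s ⊓ x ≤ t := by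
  have hsx : s ⊓ x ∈ closure ((s ⊓ ·) '' B) :=
    image_closure_subset_closure_image (hcont s) (mem_image_of_mem _ hx)
  refine closure_minimal ?_ (isClosed_Iic_of_continuous_inf hcont t) hsx
  rintro _ ⟨b, hb, rfl⟩
  exact h b hb

theorem isClosed_infCountableSet {α : Type*} [LinearOrder α] [Uncountable α]
    (hcont : ∀ s : X, Continuous (s ⊓ ·)) (htight : CountablyTight X)
    (hIic : ∀ a : α, (Iic a).Countable) {e : α → X} (he : Monotone e) :
    IsClosed (infCountableSet (range e)) := by
  refine isClosed_of_closure_subset fun x hx => ?_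
  obtain ⟨B, hBI, hBc, hxB⟩ := htight _ x hx
  have hmono : ∀ z : X, Monotone fun a => z ⊓ e a := fun z a b hab => inf_le_inf_left z (he hab)
  have hstab : ∀ b ∈ B, ∃ a, ∀ c, a ≤ c → x ⊓ b ⊓ e c = x ⊓ b ⊓ e a := fun b hb =>
    (hmono _).exists_forall_ge_eq_of_countable_range hIic
      (mem_infCountableSet_range.mp (inf_mem_infCountableSet x (hBI hb)))
  choose! g hg using hstab
  obtain ⟨A, hA⟩ := exists_forall_le_of_countable hIic (hBc.image g)
  have hconst : ∀ c, A ≤ c → x ⊓ e c = x ⊓ e A := by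
    intro c hc
    refine le_antisymm ?_ (hmono x hc)
    have key : (x ⊓ e c) ⊓ x ≤ x ⊓ e A := by
      refine inf_le_of_mem_closure hcont hxB fun b hb => ?_
      have hgA := hA _ (mem_image_of_mem g hb)
      calc x ⊓ e c ⊓ b = x ⊓ b ⊓ e c := inf_right_comm _ _ _
        _ = x ⊓ b ⊓ e A := by rw [hg b hb c (hgA.trans hc), hg b hb A hgA]
        _ ≤ x ⊓ e A := inf_le_inf_right _ inf_le_left
    rwa [inf_right_comm, inf_idem] at key
  exact mem_infCountableSet_range.mpr (countable_range_of_forall_ge_eq hIic hconst)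

end Semilattice

/-- Let `X` be a countably tight Hausdorff semitopological semilattice and `L` a chain
order-isomorphic to `(ω₁, min)`.  Then `I_L = {x : xL is countable}` is a closed ideal. -/
theorem IL_closed_ideal {X : Type*} [SemilatticeInf X] [TopologicalSpace X] [T2Space X]
    (hcont : ∀ s : X, Continuous fun x => s ⊓ x)
    (htight : CountablyTight X)
    (L : Set X)
    (hiso : Nonempty ((Set.Iio (Cardinal.aleph 1).ord) ≃o L)) :
    IsClosed {x : X | ((fun l => x ⊓ l) '' L).Countable} ∧
    ({x : X | ((fun l => x ⊓ l) '' L).Countable}).Nonempty ∧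
    ∀ a : X, ∀ y ∈ {x : X | ((fun l => x ⊓ l) '' L).Countable},
      a ⊓ y ∈ {x : X | ((fun l => x ⊓ l) '' L).Countable} := by
  obtain ⟨e⟩ := hiso
  have he : Monotone fun a => (e a : X) := fun a b hab => e.monotone hab
  have hL : L = range fun a => (e a : X) := by
    ext l
    exact ⟨fun hl => ⟨e.symm ⟨l, hl⟩, by simp⟩, by rintro ⟨a, rfl⟩; exact (e a).2⟩
  rw [hL]
  exact ⟨isClosed_infCountableSet hcont htight countable_Iic_Iio_ord_aleph_one he,
    (range_nonempty _).mono (range_subset_infCountableSet countable_Iic_Iio_ord_aleph_one he),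
    fun a _ hy => inf_mem_infCountableSet a hy⟩
end
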